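/- Let k ≥ 2 and q = 2^(2k-1), and let D = { x^(2^k - 1) + x^(2^k) : x ∈ F_q }. Then there do not exist u, v ∈ D with u + v = 1. -/

import Mathlib

/-!
Let `Tr` be the trace of `F` over `𝔽₂`; it is invariant under squaring. For `x ∈ F`, the identity
`x^(2q-1) = x` (with `q = 2^(2k-1)`) gives `(x^(2^k-1) + x^(2^k))^(2^k+1) = x(1+x)(1+x^(2^k))`,
which equals `(x + x^2) + (w^(2^k) + w^2)` with `w = x^(2^(k-1)+1)`; so `Tr (u^(2^k+1)) = 0` for
every `u ∈ D`. But `(u+1)^(2^k+1) = u^(2^k+1) + (u^(2^k) + u) + 1` and `Tr 1 = [F : 𝔽₂] = 2k-1` is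
odd, so `Tr ((u+1)^(2^k+1)) = Tr (u^(2^k+1)) + 1`: `u` and `u + 1` are never both in `D`.
-/

open Algebra Module

section TraceFrobenius

variable {K L : Type*} [Field K] [Fintype K] [Field L] [Algebra K L] [Algebra.IsAlgebraic K L]

theorem Algebra.trace_pow_card (x : L) : trace K L (x ^ Fintype.card K) = trace K L x :=
  trace_eq_of_algEquiv (FiniteField.frobeniusAlgEquivOfAlgebraic K L) x

theorem Algebra.trace_pow_card_pow (n : ℕ) (x : L) :
    trace K L (x ^ Fintype.card K ^ n) = trace K L x := by
  induction n with
  | zero => simp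
  | succ n ih => rw [pow_succ, pow_mul, trace_pow_card, ih]

end TraceFrobenius

theorem FiniteField.pow_two_mul_card_sub_one {K : Type*} [GroupWithZero K] [Fintype K] (x : K) :
    x ^ (2 * Fintype.card K - 1) = x := by
  have hq := Fintype.card_pos (α := K)
  calc x ^ (2 * Fintype.card K - 1) = x ^ (Fintype.card K - 1) * x ^ Fintype.card K := by
        rw [← pow_add]; congr 1; omega
    _ = x := by rw [FiniteField.pow_card, ← pow_succ, Nat.sub_add_cancel hq, FiniteField.pow_card]

theorem Nat.two_pow_sub_one_mul_two_pow_add_one {k : ℕ} (hk : 1 ≤ k) :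
    (2 ^ k - 1) * (2 ^ k + 1) = 2 * 2 ^ (2 * k - 1) - 1 := by
  have h : 2 * 2 ^ (2 * k - 1) = 2 ^ k * 2 ^ k := by
    rw [← pow_succ', ← pow_add]; congr 1; omega
  have hpos : 1 ≤ 2 ^ k := Nat.one_le_two_pow
  rw [h]
  zify [hpos, Nat.one_le_iff_ne_zero.mpr (by positivity : 2 ^ k * 2 ^ k ≠ 0)]
  ring

namespace BinaryField

theorem pow_two_pow_sub_one_add_pow_two_pow_pow {F : Type*} [Field F] [Fintype F] [CharP F 2]
    {k : ℕ} (hk : 1 ≤ k) (hcard : Fintype.card F = 2 ^ (2 * k - 1)) (x : F) :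
    (x ^ (2 ^ k - 1) + x ^ 2 ^ k) ^ (2 ^ k + 1) = x * (1 + x) * (1 + x ^ 2 ^ k) := by
  have hfac : x ^ (2 ^ k - 1) + x ^ 2 ^ k = x ^ (2 ^ k - 1) * (1 + x) := by
    rw [mul_add, mul_one, ← pow_succ, Nat.sub_add_cancel Nat.one_le_two_pow]
  rw [hfac, mul_pow, ← pow_mul, Nat.two_pow_sub_one_mul_two_pow_add_one hk, ← hcard,
    FiniteField.pow_two_mul_card_sub_one, pow_succ, add_pow_char_pow, one_pow]
  ring

variable {F : Type*} [Field F] [Fintype F] [Algebra (ZMod 2) F]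

theorem trace_pow_two_pow (n : ℕ) (x : F) : trace (ZMod 2) F (x ^ 2 ^ n) = trace (ZMod 2) F x := by
  simpa only [ZMod.card] using trace_pow_card_pow (K := ZMod 2) n x

theorem trace_pow_two_pow_add_pow_two_pow (m n : ℕ) (x : F) :
    trace (ZMod 2) F (x ^ 2 ^ m + x ^ 2 ^ n) = 0 := by
  rw [map_add, trace_pow_two_pow, trace_pow_two_pow, CharTwo.add_self_eq_zero]

theorem finrank_eq_of_card_eq_two_pow {n : ℕ} (h : Fintype.card F = 2 ^ n) :
    finrank (ZMod 2) F = n := by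
  rw [card_eq_pow_finrank (K := ZMod 2), ZMod.card] at h
  exact Nat.pow_right_injective le_rfl h

theorem trace_one_of_odd_finrank (h : Odd (finrank (ZMod 2) F)) : trace (ZMod 2) F 1 = 1 := by
  rw [← map_one (algebraMap (ZMod 2) F), trace_algebraMap, nsmul_one, h.natCast_zmod_two]

variable [CharP F 2]

theorem trace_add_one_pow_two_pow_add_one (n : ℕ) (u : F) :
    trace (ZMod 2) F ((u + 1) ^ (2 ^ n + 1)) =
      trace (ZMod 2) F (u ^ (2 ^ n + 1)) + trace (ZMod 2) F 1 := by
  have h : (u + 1) ^ (2 ^ n + 1) = u ^ (2 ^ n + 1) + (u ^ 2 ^ n + u ^ 2 ^ 0) + 1 := by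
    rw [pow_succ, add_pow_char_pow, one_pow]; ring
  rw [h, map_add, map_add, trace_pow_two_pow_add_pow_two_pow, add_zero]

variable {k : ℕ}

theorem trace_pow_two_pow_sub_one_add_pow_two_pow_pow (hk : 1 ≤ k)
    (hcard : Fintype.card F = 2 ^ (2 * k - 1)) (x : F) :
    trace (ZMod 2) F ((x ^ (2 ^ k - 1) + x ^ 2 ^ k) ^ (2 ^ k + 1)) = 0 := by
  set w := x ^ (2 ^ (k - 1) + 1)
  have hw : w ^ 2 ^ k = x * x ^ 2 ^ k := by
    rw [← pow_mul, add_mul, one_mul, ← pow_add, pow_add, show k - 1 + k = 2 * k - 1 by omega,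
      ← hcard, FiniteField.pow_card]
  have hw' : w ^ 2 ^ 1 = x ^ 2 * x ^ 2 ^ k := by
    rw [← pow_mul, add_mul, one_mul, ← pow_add, Nat.sub_add_cancel hk, pow_add]; ring
  rw [pow_two_pow_sub_one_add_pow_two_pow_pow hk hcard,
    show x * (1 + x) * (1 + x ^ 2 ^ k) = (x ^ 2 ^ 0 + x ^ 2 ^ 1) + (w ^ 2 ^ k + w ^ 2 ^ 1) by
      rw [hw, hw']; ring,
    map_add, trace_pow_two_pow_add_pow_two_pow, trace_pow_two_pow_add_pow_two_pow, add_zero]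

end BinaryField

open BinaryField in
theorem stmt_13_general {k : ℕ} (F : Type*) [Field F] [Fintype F]
    [Algebra (ZMod 2) F] (hcard : Fintype.card F = 2 ^ (2 * k - 1))
    (D : Set F) (hD : D = {u : F | ∃ x : F, u = x ^ (2 ^ k - 1) + x ^ (2 ^ k)}) :
    ¬ ∃ u ∈ D, ∃ v ∈ D, u + v = 1 := by
  have : CharP F 2 := charP_of_injective_algebraMap' (ZMod 2) 2
  have hk : 1 ≤ k := Nat.one_le_iff_ne_zero.mpr fun hk0 => by
    simpa [hk0, hcard] using Fintype.one_lt_card (α := F)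
  have htrD : ∀ u ∈ D, trace (ZMod 2) F (u ^ (2 ^ k + 1)) = 0 := by
    rw [hD]
    rintro _ ⟨x, rfl⟩
    exact trace_pow_two_pow_sub_one_add_pow_two_pow_pow hk hcard x
  have htr1 : trace (ZMod 2) F 1 = 1 := by
    apply trace_one_of_odd_finrank
    rw [finrank_eq_of_card_eq_two_pow hcard]
    exact ⟨k - 1, by omega⟩
  rintro ⟨u, hu, v, hv, huv⟩
  obtain rfl : v = u + 1 := by
    rw [eq_sub_of_add_eq' huv, CharTwo.sub_eq_add, add_comm]
  have := trace_add_one_pow_two_pow_add_one k u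
  rw [htrD _ hv, htrD _ hu, htr1] at this
  exact zero_ne_one (this.trans (zero_add 1))

theorem stmt_13 {k : ℕ} (hk : 2 ≤ k) (F : Type*) [Field F] [Fintype F]
    [Algebra (ZMod 2) F] (hcard : Fintype.card F = 2 ^ (2 * k - 1))
    (D : Set F) (hD : D = {u : F | ∃ x : F, u = x ^ (2 ^ k - 1) + x ^ (2 ^ k)}) :
    ¬ ∃ u ∈ D, ∃ v ∈ D, u + v = 1 :=
  stmt_13_general F hcard D hD
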